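/- arXiv:1910.12672 — 2 statements merged into one kernel-verified Lean document; each statement's English description precedes it below -/
import Mathlib

section
/- Let Ω ⊂ ℝⁿ (n ∈ {2,3}) be a bounded, strongly Lipschitz domain, ξ₁, ξ₂, σ, ρ > 0 fixed, and define the anisotropy operator a : L²(Ω, ℝ³) → L^∞(Ω) by a[u](x) = exp(−‖(𝒢_ρ ∗ D𝒢_σ ∗ u)(x)‖₂² / ξ₁) + ξ₂, where 𝒢_σ, 𝒢_ρ are Gaussian kernels with standard deviations σ, ρ. Then a satisfies: (A1) ξ₂ ≤ c_a < a[u](x) < C_a for constants 0 < c_a < C_a, all u and a.e. x; (A2) u_k ⇀ u weakly in L²(Ω, ℝ³) implies a[u_k] → a[u] in L^∞(Ω); and (A3) for every bounded neighborhood 𝒰 ⊂ L²(Ω, ℝ³) there exists L_a > 0 with ‖a[u] − a[ũ]‖_{L^∞(Ω)} ≤ L_a ‖u − ũ‖_{L²(Ω)} for all u, ũ ∈ 𝒰. -/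
/-!
Write `a[u](x) = ψ(T u x)` with `ψ(t) = exp(-|t|²/ξ₁) + ξ₂` and `T u x = (𝒢_ρ ∗ D𝒢_σ ∗ u)(x)`.
The profile `ψ` takes values in `(ξ₂, ξ₂ + 1]`, which is (A1), and is globally Lipschitz.
The kernel `G = 𝒢_ρ ∗ D𝒢_σ` is bounded and Lipschitz (a bounded Lipschitz Gaussian convolved with
the integrable `D𝒢_σ`), so every entry of `T u x` is an `L²(Ω)` inner product `⟪u, Φ_x⟫` with
test functions `Φ_x` that are bounded in `L²(Ω)` and depend continuously on `x`.
The bound gives `|T u x - T ũ x| ≤ M ‖u - ũ‖_{L²}` uniformly in `x`, hence (A3). For (A2),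
Banach–Steinhaus makes a weakly convergent sequence equicontinuous as a family of functionals,
so it converges uniformly on the compact set `{Φ_x : x ∈ Ω̄}`; thus `T u_k → T u` uniformly on
`Ω̄`, and the uniformly continuous `ψ` preserves this.
-/

open MeasureTheory Filter Topology Matrix Set
open scoped ENNReal

noncomputable section

attribute [local instance] Matrix.frobeniusNormedAddCommGroup Matrix.frobeniusNormedSpace

/-- Euclidean space `ℝⁿ`. -/
abbrev E (n : ℕ) := EuclideanSpace ℝ (Fin n)

/-- The feature target space `ℝ^{3+C}`. -/
abbrev Feat (C : ℕ) := EuclideanSpace ℝ (Fin (3 + C))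

/-- Jacobian matrix `Dφ(x)` of a map `φ : ℝⁿ → ℝⁿ`. -/
def jac {n : ℕ} (φ : E n → E n) (x : E n) : Matrix (Fin n) (Fin n) ℝ :=
  Matrix.of fun i j => fderiv ℝ φ x (EuclideanSpace.single j 1) i

/-- Squared Frobenius norm of a matrix. -/
def frobSq {n : ℕ} (A : Matrix (Fin n) (Fin n) ℝ) : ℝ := ∑ i, ∑ j, (A i j)^2

/-- Frobenius norm of a matrix. -/
def frobNorm {n : ℕ} (A : Matrix (Fin n) (Fin n) ℝ) : ℝ := Real.sqrt (frobSq A)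

/-- Symmetric part `A^sym = (A + Aᵀ)/2`. -/
def symPart {n : ℕ} (A : Matrix (Fin n) (Fin n) ℝ) : Matrix (Fin n) (Fin n) ℝ :=
  (1/2 : ℝ) • (A + Aᵀ)

/-- Projection `𝒫` of a feature map onto its RGB image component (the first 3 channels). -/
def Pproj {n C : ℕ} (f : E n → Feat C) : E n → E 3 :=
  fun x => WithLp.toLp 2 (fun i => f x (Fin.castAdd C i))

/-- Squared `L²(Ω)`-norm. -/
def l2sq {n d : ℕ} (Ω : Set (E n)) (f : E n → EuclideanSpace ℝ (Fin d)) : ℝ :=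
  ∫ x in Ω, ‖f x‖^2

/-- `L²(Ω)`-distance. -/
def l2dist {n d : ℕ} (Ω : Set (E n)) (f g : E n → EuclideanSpace ℝ (Fin d)) : ℝ :=
  Real.sqrt (∫ x in Ω, ‖f x - g x‖^2)

/-- Squared `H^m(Ω)`-norm: `‖f‖²_{H^m} = Σ_{j≤m} ‖D^j f‖²_{L²(Ω)}`. -/
def hmNormSq {n : ℕ} (Ω : Set (E n)) (m : ℕ) (φ : E n → E n) : ℝ :=
  ∑ j ∈ Finset.range (m+1), ∫ x in Ω, ‖iteratedFDeriv ℝ j φ x‖^2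

/-- Weak convergence `u_k ⇀ u` in `L²(Ω, ℝ^d)`. -/
def WeakL2 {n d : ℕ} (Ω : Set (E n)) (u : ℕ → E n → EuclideanSpace ℝ (Fin d))
    (ul : E n → EuclideanSpace ℝ (Fin d)) : Prop :=
  (∀ k, MemLp (u k) 2 (volume.restrict Ω)) ∧ MemLp ul 2 (volume.restrict Ω) ∧
  ∀ g : E n → EuclideanSpace ℝ (Fin d), MemLp g 2 (volume.restrict Ω) →
    Tendsto (fun k => ∫ x in Ω, (inner ℝ (u k x) (g x) : ℝ)) atTop
      (𝓝 (∫ x in Ω, (inner ℝ (ul x) (g x) : ℝ)))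

/-- Convergence `b_k → b` in `L^∞(Ω)`. -/
def LinfTendsto {n : ℕ} (Ω : Set (E n)) (b : ℕ → E n → ℝ) (bl : E n → ℝ) : Prop :=
  Tendsto (fun k => eLpNorm (fun x => b k x - bl x) ⊤ (volume.restrict Ω)) atTop (𝓝 0)

/-- Assumption (A1): uniform bounds `c_a < a[u](x) < C_a` for a.e. `x ∈ Ω` and all `u`. -/
def AssumpA1 {n : ℕ} (Ω : Set (E n)) (A : (E n → E 3) → E n → ℝ) (ca Ca : ℝ) : Prop :=
  0 < ca ∧ ca < Ca ∧ ∀ u : E n → E 3, ∀ᵐ x ∂(volume.restrict Ω), ca < A u x ∧ A u x < Ca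

/-- Assumption (A2): `u_k ⇀ u` in `L²(Ω,ℝ³)` implies `a[u_k] → a[u]` in `L^∞(Ω)`. -/
def AssumpA2 {n : ℕ} (Ω : Set (E n)) (A : (E n → E 3) → E n → ℝ) : Prop :=
  ∀ (u : ℕ → E n → E 3) (ul : E n → E 3), WeakL2 Ω u ul →
    LinfTendsto Ω (fun k => A (u k)) (A ul)

/-- Assumption (A3): local Lipschitz continuity of `a` from `L²(Ω,ℝ³)` to `L^∞(Ω)`. -/
def AssumpA3 {n : ℕ} (Ω : Set (E n)) (A : (E n → E 3) → E n → ℝ) : Prop :=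
  ∀ R > (0:ℝ), ∃ La > (0:ℝ), ∀ u utl : E n → E 3,
    MemLp u 2 (volume.restrict Ω) → MemLp utl 2 (volume.restrict Ω) →
    l2sq Ω u ≤ R → l2sq Ω utl ≤ R →
    eLpNorm (fun x => A u x - A utl x) ⊤ (volume.restrict Ω) ≤
      ENNReal.ofReal (La * l2dist Ω u utl)

/-- The `n`-dimensional Gaussian kernel with standard deviation `σ`. -/
def gauss {n : ℕ} (σ : ℝ) (x : E n) : ℝ :=
  (2 * Real.pi * σ^2) ^ (-(n:ℝ)/2) * Real.exp (-‖x‖^2 / (2 * σ^2))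

/-- The gradient `D𝒢_σ` of the Gaussian kernel. -/
def dgauss {n : ℕ} (σ : ℝ) (x : E n) : E n := (-(1/σ^2) * gauss σ x) • x

/-- The convolved kernel `𝒢_ρ ∗ D𝒢_σ`. -/
def gaussKer {n : ℕ} (σ ρ : ℝ) (w : E n) : E n :=
  ∫ v : E n, gauss ρ v • dgauss σ (w - v)

/-- The anisotropy operator `a[u](x) = exp(−‖(𝒢_ρ ∗ D𝒢_σ ∗ u)(x)‖₂²/ξ₁) + ξ₂`, where `u` is
extended by zero outside `Ω`. -/
def Aop {n : ℕ} (Ω : Set (E n)) (σ ρ ξ1 ξ2 : ℝ) (u : E n → E 3) (x : E n) : ℝ :=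
  Real.exp (-(∑ i : Fin 3, ∑ j : Fin n,
    (∫ y in Ω, gaussKer σ ρ (x - y) j * u y i)^2) / ξ1) + ξ2

open scoped RealInnerProductSpace NNReal

theorem EquicontinuousOn.tendstoUniformlyOn_of_tendsto {ι X α : Type*} [TopologicalSpace X]
    [UniformSpace α] {F : ι → X → α} {f : X → α} {S : Set X} (hS : IsCompact S)
    (hF : EquicontinuousOn F S) {l : Filter ι}
    (h : ∀ x ∈ S, Tendsto (fun i => F i x) l (𝓝 (f x))) :
    TendstoUniformlyOn F f l S := by
  have key := (EquicontinuousOn.tendsto_uniformOnFun_iff_pi' (𝔖 := {S}) (by simpa using hS)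
    (by simpa using hF) l f).2 (by
      rw [sUnion_singleton, tendsto_pi_nhds]
      exact fun x => h x x.2)
  exact (UniformOnFun.tendsto_iff_tendstoUniformlyOn.1 key) S rfl

theorem ContinuousLinearMap.tendstoUniformlyOn_of_tendsto {𝕜 E F : Type*}
    [NontriviallyNormedField 𝕜] [NormedAddCommGroup E] [NormedSpace 𝕜 E] [CompleteSpace E]
    [NormedAddCommGroup F] [NormedSpace 𝕜 F] {T : ℕ → E →L[𝕜] F} {T₀ : E → F}
    (h : ∀ x, Tendsto (fun k => T k x) atTop (𝓝 (T₀ x))) {S : Set E} (hS : IsCompact S) :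
    TendstoUniformlyOn (fun k x => T k x) T₀ atTop S := by
  have hT : UniformEquicontinuous fun k x => T k x :=
    (norm_withSeminorms 𝕜 F).banach_steinhaus fun _ x => by
      simpa [Set.range_comp] using (h x).norm.bddAbove_range
  exact hT.equicontinuous.equicontinuousOn S |>.tendstoUniformlyOn_of_tendsto hS fun x _ => h x

theorem tendstoUniformlyOn_pi_of_forall {ι α κ : Type*} [Fintype κ] {β : κ → Type*}
    [∀ p, PseudoMetricSpace (β p)] {F : ι → α → ∀ p, β p} {f : α → ∀ p, β p} {l : Filter ι}
    {s : Set α} (h : ∀ p, TendstoUniformlyOn (fun i x => F i x p) (fun x => f x p) l s) :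
    TendstoUniformlyOn F f l s := by
  simp only [Metric.tendstoUniformlyOn_iff] at h ⊢
  intro ε hε
  filter_upwards [eventually_all.2 fun p => h p ε hε] with i hi x hx
  exact (dist_pi_lt_iff hε).2 fun p => hi p x hx

theorem tendsto_eLpNorm_top_of_tendstoUniformlyOn {ι α F : Type*} [MeasurableSpace α]
    {μ : Measure α} [NormedAddCommGroup F] {G : ι → α → F} {g : α → F} {l : Filter ι}
    {s : Set α} (hs : ∀ᵐ x ∂μ, x ∈ s) (h : TendstoUniformlyOn G g l s) :
    Tendsto (fun i => eLpNorm (fun x => G i x - g x) ∞ μ) l (𝓝 0) := by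
  rw [ENNReal.tendsto_nhds_zero]
  intro ε hε
  rcases eq_or_ne ε ∞ with rfl | hε_top
  · exact Eventually.of_forall fun _ => le_top
  filter_upwards [Metric.tendstoUniformlyOn_iff.1 h _ (ENNReal.toReal_pos hε.ne' hε_top)]
    with i hi
  rw [eLpNorm_exponent_top, ← ENNReal.ofReal_toReal hε_top]
  refine eLpNormEssSup_le_of_ae_bound ?_
  filter_upwards [hs] with x hx
  rw [← dist_eq_norm, dist_comm]
  exact (hi x hx).le

namespace MeasureTheory.MemLp

variable {α F : Type*} [MeasurableSpace α] {μ : Measure α} [NormedAddCommGroup F]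
  [InnerProductSpace ℝ F]

theorem inner_toLp_toLp {f g : α → F} (hf : MemLp f 2 μ) (hg : MemLp g 2 μ) :
    ⟪hf.toLp f, hg.toLp g⟫ = ∫ a, ⟪f a, g a⟫ ∂μ := by
  rw [L2.inner_def]
  refine integral_congr_ae ?_
  filter_upwards [hf.coeFn_toLp, hg.coeFn_toLp] with a hfa hga
  rw [hfa, hga]

theorem norm_toLp_eq_sqrt_integral {f : α → F} (hf : MemLp f 2 μ) :
    ‖hf.toLp f‖ = √(∫ a, ‖f a‖ ^ 2 ∂μ) := by
  rw [← Real.sqrt_sq (norm_nonneg _), ← real_inner_self_eq_norm_sq, hf.inner_toLp_toLp]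
  simp_rw [real_inner_self_eq_norm_sq]

end MeasureTheory.MemLp

theorem WeakL2.tendsto_inner_toLp {n d : ℕ} {Ω : Set (E n)} {u : ℕ → E n → EuclideanSpace ℝ (Fin d)}
    {ul : E n → EuclideanSpace ℝ (Fin d)} (h : WeakL2 Ω u ul)
    (φ : Lp (EuclideanSpace ℝ (Fin d)) 2 (volume.restrict Ω)) :
    Tendsto (fun k => ⟪(h.1 k).toLp (u k), φ⟫) atTop (𝓝 ⟪h.2.1.toLp ul, φ⟫) := by
  have key : ∀ (v : E n → EuclideanSpace ℝ (Fin d)) (hv : MemLp v 2 (volume.restrict Ω)),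
      ⟪hv.toLp v, φ⟫ = ∫ x in Ω, ⟪v x, φ x⟫ := fun v hv => by
    conv_lhs => rw [← Lp.toLp_coeFn φ (Lp.memLp φ)]
    exact hv.inner_toLp_toLp _
  simpa only [key] using h.2.2 φ (Lp.memLp φ)

section Gaussian

open Real

theorem abs_mul_exp_neg_sq_div_le {ξ : ℝ} (hξ : 0 < ξ) (r : ℝ) :
    |r| * exp (-r ^ 2 / ξ) ≤ √ξ / 2 := by
  have hs : 0 < √ξ := sqrt_pos.2 hξ
  have hamgm : 2 * |r| * √ξ ≤ ξ + r ^ 2 := by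
    nlinarith [sq_nonneg (|r| - √ξ), sq_sqrt hξ.le, sq_abs r]
  have hexp : ξ + r ^ 2 ≤ ξ * exp (r ^ 2 / ξ) := by
    have := add_one_le_exp (r ^ 2 / ξ)
    calc ξ + r ^ 2 = ξ * (r ^ 2 / ξ + 1) := by field_simp; ring
      _ ≤ ξ * exp (r ^ 2 / ξ) := by gcongr
  rw [neg_div, exp_neg, ← div_eq_mul_inv, div_le_iff₀ (exp_pos _)]
  nlinarith [exp_pos (r ^ 2 / ξ), sq_sqrt hξ.le]

theorem lipschitzWith_exp_neg_sq_div {ξ : ℝ} (hξ : 0 < ξ) :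
    LipschitzWith (Real.toNNReal (1 / √ξ)) fun r : ℝ => exp (-r ^ 2 / ξ) := by
  have hderiv (r : ℝ) :
      HasDerivAt (fun r : ℝ => exp (-r ^ 2 / ξ)) (exp (-r ^ 2 / ξ) * (-(2 * r) / ξ)) r := by
    simpa using ((hasDerivAt_pow 2 r).neg.div_const ξ).exp
  refine lipschitzWith_of_nnnorm_deriv_le (fun r => (hderiv r).differentiableAt) fun r => ?_
  rw [(hderiv r).deriv, ← NNReal.coe_le_coe, coe_nnnorm, Real.coe_toNNReal _ (by positivity),
    norm_mul, norm_div, norm_neg, norm_mul, Real.norm_of_nonneg (exp_pos _).le, Real.norm_two,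
    Real.norm_eq_abs r, Real.norm_of_nonneg hξ.le]
  have hdecay := abs_mul_exp_neg_sq_div_le hξ r
  have hs : 0 < √ξ := sqrt_pos.2 hξ
  calc exp (-r ^ 2 / ξ) * (2 * |r| / ξ) = 2 / ξ * (|r| * exp (-r ^ 2 / ξ)) := by ring
    _ ≤ 2 / ξ * (√ξ / 2) := by gcongr
    _ = 1 / √ξ := by field_simp; rw [sq_sqrt hξ.le]

theorem abs_exp_neg_sq_div_sub_le {ξ : ℝ} (hξ : 0 < ξ) (a b : ℝ) :
    |exp (-a ^ 2 / ξ) - exp (-b ^ 2 / ξ)| ≤ |a - b| / √ξ := by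
  have := (lipschitzWith_exp_neg_sq_div hξ).dist_le_mul a b
  rwa [Real.coe_toNNReal _ (by positivity), Real.dist_eq, Real.dist_eq, one_div_mul_eq_div] at this

theorem integrable_exp_neg_sq_norm_div {V : Type*} [NormedAddCommGroup V] [InnerProductSpace ℝ V]
    [FiniteDimensional ℝ V] [MeasurableSpace V] [BorelSpace V] {ξ : ℝ} (hξ : 0 < ξ) :
    Integrable fun x : V => exp (-‖x‖ ^ 2 / ξ) := by
  have h := GaussianFourier.integrable_cexp_neg_mul_sq_norm_add (V := V) (b := ((1 / ξ : ℝ) : ℂ))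
    (by simpa using hξ) 0 0
  refine h.norm.congr (Eventually.of_forall fun x => ?_)
  simp only [zero_mul, add_zero, Complex.norm_exp]
  norm_cast
  ring_nf

end Gaussian

section Convolution

variable {V F : Type*} [MeasurableSpace V] {μ : Measure V} [NormedAddCommGroup F] [NormedSpace ℝ F]
  {f : V → F} {C : ℝ}

theorem norm_integral_smul_le_of_abs_le {c : V → ℝ} (hf : Integrable f μ) (hc : ∀ v, |c v| ≤ C) :
    ‖∫ v, c v • f v ∂μ‖ ≤ C * ∫ v, ‖f v‖ ∂μ := by
  rw [← integral_const_mul]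
  refine norm_integral_le_of_norm_le (hf.norm.const_mul C) (Eventually.of_forall fun v => ?_)
  rw [norm_smul, Real.norm_eq_abs]
  exact mul_le_mul_of_nonneg_right (hc v) (norm_nonneg _)

theorem lipschitzWith_integral_smul_comp_sub [NormedAddCommGroup V] [OpensMeasurableSpace V]
    {g : V → ℝ} {K : ℝ≥0} (hg : LipschitzWith K g)
    (hgC : ∀ v, |g v| ≤ C) (hf : Integrable f μ) :
    LipschitzWith (K * Real.toNNReal (∫ v, ‖f v‖ ∂μ)) fun w => ∫ v, g (w - v) • f v ∂μ := by
  have hint (w : V) : Integrable (fun v => g (w - v) • f v) μ :=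
    hf.bdd_smul C (hg.continuous.comp (continuous_const.sub continuous_id)).aestronglyMeasurable
      (Eventually.of_forall fun v => (Real.norm_eq_abs _).trans_le (hgC _))
  refine LipschitzWith.of_dist_le_mul fun w w' => ?_
  rw [dist_eq_norm, ← integral_sub (hint w) (hint w'), NNReal.coe_mul,
    Real.coe_toNNReal _ (integral_nonneg fun _ => norm_nonneg _), mul_right_comm]
  simp_rw [← sub_smul]
  refine norm_integral_smul_le_of_abs_le hf fun v => ?_
  have := hg.dist_le_mul (w - v) (w' - v)
  rwa [Real.dist_eq, dist_eq_norm, sub_sub_sub_cancel_right, ← dist_eq_norm] at this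

end Convolution

section GaussianKernel

open Real

variable {n : ℕ} {σ ρ : ℝ}

theorem gauss_nonneg (σ : ℝ) (x : E n) : 0 ≤ gauss σ x := by
  unfold gauss; positivity

theorem gauss_le (σ : ℝ) (x : E n) : gauss σ x ≤ (2 * π * σ ^ 2) ^ (-(n : ℝ) / 2) := by
  refine mul_le_of_le_one_right (by positivity) (exp_le_one_iff.2 ?_)
  exact div_nonpos_of_nonpos_of_nonneg (neg_nonpos.2 (sq_nonneg _)) (by positivity)

theorem lipschitzWith_gauss (hσ : 0 < σ) :
    LipschitzWith (Real.toNNReal ((2 * π * σ ^ 2) ^ (-(n : ℝ) / 2) / √(2 * σ ^ 2)))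
      (gauss (n := n) σ) := by
  refine LipschitzWith.of_dist_le_mul fun x y => ?_
  rw [Real.coe_toNNReal _ (by positivity), Real.dist_eq, dist_eq_norm, gauss, gauss, ← mul_sub,
    abs_mul, abs_of_nonneg (by positivity), div_mul_eq_mul_div, mul_div_assoc]
  gcongr
  calc _ ≤ |‖x‖ - ‖y‖| / √(2 * σ ^ 2) := abs_exp_neg_sq_div_sub_le (by positivity) _ _
    _ ≤ ‖x - y‖ / √(2 * σ ^ 2) := by gcongr; exact abs_norm_sub_norm_le x y
    _ = _ := by ring

theorem integrable_dgauss (hσ : 0 < σ) : Integrable (dgauss (n := n) σ) := by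
  have hcont : Continuous (dgauss (n := n) σ) := by unfold dgauss gauss; fun_prop
  refine ((integrable_exp_neg_sq_norm_div (V := E n) (ξ := (2 * σ) ^ 2) (by positivity)).const_mul
    ((2 * π * σ ^ 2) ^ (-(n : ℝ) / 2) / σ)).mono' hcont.aestronglyMeasurable
    (Eventually.of_forall fun x => ?_)
  -- the factor `‖x‖` is absorbed by half of the Gaussian decay
  have hdecay := abs_mul_exp_neg_sq_div_le (ξ := (2 * σ) ^ 2) (by positivity) ‖x‖
  rw [sqrt_sq (by positivity), abs_norm] at hdecay
  have hsplit : exp (-‖x‖ ^ 2 / (2 * σ ^ 2))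
      = exp (-‖x‖ ^ 2 / (2 * σ) ^ 2) * exp (-‖x‖ ^ 2 / (2 * σ) ^ 2) := by
    rw [← exp_add]; ring_nf
  rw [dgauss, gauss, norm_smul, norm_mul, norm_neg, Real.norm_of_nonneg (by positivity),
    Real.norm_of_nonneg (by positivity), hsplit]
  calc 1 / σ ^ 2 * ((2 * π * σ ^ 2) ^ (-(n : ℝ) / 2)
        * (exp (-‖x‖ ^ 2 / (2 * σ) ^ 2) * exp (-‖x‖ ^ 2 / (2 * σ) ^ 2))) * ‖x‖
      = (2 * π * σ ^ 2) ^ (-(n : ℝ) / 2) / σ ^ 2 * exp (-‖x‖ ^ 2 / (2 * σ) ^ 2)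
        * (‖x‖ * exp (-‖x‖ ^ 2 / (2 * σ) ^ 2)) := by ring
    _ ≤ (2 * π * σ ^ 2) ^ (-(n : ℝ) / 2) / σ ^ 2 * exp (-‖x‖ ^ 2 / (2 * σ) ^ 2)
        * (2 * σ / 2) := by gcongr
    _ = _ := by field_simp

theorem gaussKer_eq_integral (σ ρ : ℝ) (w : E n) :
    gaussKer σ ρ w = ∫ v, gauss ρ (w - v) • dgauss σ v := by
  rw [gaussKer, ← integral_sub_left_eq_self _ volume w]
  simp only [sub_sub_cancel]

theorem exists_bound_lipschitzWith_gaussKer (hσ : 0 < σ) (hρ : 0 < ρ) :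
    ∃ (K : ℝ) (L : ℝ≥0), (∀ w : E n, ‖gaussKer σ ρ w‖ ≤ K) ∧
      LipschitzWith L (gaussKer (n := n) σ ρ) := by
  have hbound (v : E n) : |gauss ρ v| ≤ (2 * π * ρ ^ 2) ^ (-(n : ℝ) / 2) :=
    (abs_of_nonneg (gauss_nonneg ρ v)).trans_le (gauss_le ρ v)
  have hker : gaussKer σ ρ = fun w : E n => ∫ v, gauss ρ (w - v) • dgauss σ v :=
    funext (gaussKer_eq_integral σ ρ)
  refine ⟨(2 * π * ρ ^ 2) ^ (-(n : ℝ) / 2) * ∫ v : E n, ‖dgauss σ v‖, _, fun w => ?_,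
    hker ▸ lipschitzWith_integral_smul_comp_sub (lipschitzWith_gauss hρ) hbound
      (integrable_dgauss hσ)⟩
  rw [hker]
  exact norm_integral_smul_le_of_abs_le (integrable_dgauss hσ) fun v => hbound (w - v)

end GaussianKernel

section AnisotropyProfile

open Real

variable {ι : Type*} [Fintype ι] {ξ1 : ℝ}

def anisoProfile (ξ1 ξ2 : ℝ) (t : ι → ℝ) : ℝ :=
  exp (-(∑ p, t p ^ 2) / ξ1) + ξ2

theorem anisoProfile_mem_Ioc (hξ1 : 0 ≤ ξ1) (ξ2 : ℝ) (t : ι → ℝ) :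
    anisoProfile ξ1 ξ2 t ∈ Ioc ξ2 (ξ2 + 1) := by
  have hle : exp (-(∑ p, t p ^ 2) / ξ1) ≤ 1 :=
    exp_le_one_iff.2 (div_nonpos_of_nonpos_of_nonneg (neg_nonpos.2 (by positivity)) hξ1)
  exact ⟨lt_add_of_pos_left _ (exp_pos _), by rw [anisoProfile]; linarith⟩

theorem exists_lipschitzWith_anisoProfile (hξ1 : 0 < ξ1) (ξ2 : ℝ) :
    ∃ K, LipschitzWith K (anisoProfile (ι := ι) ξ1 ξ2) := by
  have hsum (t : ι → ℝ) : ∑ p, t p ^ 2 = ‖WithLp.toLp 2 t‖ ^ 2 := by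
    rw [EuclideanSpace.real_norm_sq_eq]
  have hlip := ((lipschitzWith_exp_neg_sq_div hξ1).comp lipschitzWith_one_norm).comp
    (PiLp.lipschitzWith_toLp 2 fun _ : ι => ℝ)
  have heq : anisoProfile (ι := ι) ξ1 ξ2
      = fun t => (((fun r => exp (-r ^ 2 / ξ1)) ∘ norm) ∘ WithLp.toLp 2) t + ξ2 := by
    funext t
    simp only [anisoProfile, Function.comp_apply, hsum]
  exact ⟨_, heq ▸ hlip.add (LipschitzWith.const ξ2)⟩

end AnisotropyProfile

section SmoothedJacobian

variable {n d : ℕ} {Ω : Set (E n)} {G : E n → E n} {K : ℝ}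

def smoothedJac (Ω : Set (E n)) (G : E n → E n) (u : E n → EuclideanSpace ℝ (Fin d)) (x : E n) :
    Fin d × Fin n → ℝ :=
  fun p => ∫ y in Ω, G (x - y) p.2 * u y p.1

theorem Aop_eq_anisoProfile (Ω : Set (E n)) (σ ρ ξ1 ξ2 : ℝ) (u : E n → E 3) :
    Aop Ω σ ρ ξ1 ξ2 u = fun x => anisoProfile ξ1 ξ2 (smoothedJac Ω (gaussKer σ ρ) u x) := by
  ext x
  simp only [Aop, anisoProfile, smoothedJac, Fintype.sum_prod_type]

def jacKernel (G : E n → E n) (x : E n) (p : Fin d × Fin n) (y : E n) :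
    EuclideanSpace ℝ (Fin d) :=
  G (x - y) p.2 • EuclideanSpace.single p.1 1

theorem norm_jacKernel_le (hGK : ∀ w, ‖G w‖ ≤ K) (x : E n) (p : Fin d × Fin n) (y : E n) :
    ‖jacKernel G x p y‖ ≤ K := by
  rw [jacKernel, norm_smul, PiLp.norm_single, norm_one, mul_one]
  exact (PiLp.norm_apply_le _ _).trans (hGK _)

theorem norm_jacKernel_sub_le {L : ℝ≥0} (hGL : LipschitzWith L G) (x x' : E n)
    (p : Fin d × Fin n) (y : E n) :
    ‖jacKernel G x p y - jacKernel G x' p y‖ ≤ L * ‖x - x'‖ := by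
  rw [jacKernel, jacKernel, ← sub_smul, norm_smul, PiLp.norm_single, norm_one, mul_one]
  calc ‖G (x - y) p.2 - G (x' - y) p.2‖ ≤ ‖G (x - y) - G (x' - y)‖ := by
        simpa only [WithLp.ofLp_sub, Pi.sub_apply] using
          PiLp.norm_apply_le (G (x - y) - G (x' - y)) p.2
    _ ≤ L * ‖(x - y) - (x' - y)‖ := by
        simpa only [dist_eq_norm] using hGL.dist_le_mul (x - y) (x' - y)
    _ = L * ‖x - x'‖ := by rw [sub_sub_sub_cancel_right]

variable {μ : Measure (E n)} [IsFiniteMeasure μ]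

theorem memLp_jacKernel (hG : Continuous G) (hGK : ∀ w, ‖G w‖ ≤ K) (x : E n)
    (p : Fin d × Fin n) : MemLp (jacKernel G x p) 2 μ := by
  refine MemLp.of_bound ?_ K (Eventually.of_forall (norm_jacKernel_le hGK x p))
  exact (by unfold jacKernel; fun_prop : Continuous (jacKernel G x p)).aestronglyMeasurable

theorem continuous_toLp_jacKernel {L : ℝ≥0} (hGL : LipschitzWith L G) (hGK : ∀ w, ‖G w‖ ≤ K)
    (p : Fin d × Fin n) :
    Continuous fun x => (memLp_jacKernel (μ := μ) hGL.continuous hGK x p).toLp _ := by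
  refine (LipschitzWith.of_dist_le_mul (K := measureUnivNNReal μ ^ (2 : ℝ≥0∞).toReal⁻¹ * L)
    fun x x' => ?_).continuous
  rw [dist_eq_norm, dist_eq_norm, ← MemLp.toLp_sub, NNReal.coe_mul, NNReal.coe_rpow, mul_assoc]
  refine Lp.norm_le_of_ae_bound (by positivity) ?_
  filter_upwards [MemLp.coeFn_toLp ((memLp_jacKernel hGL.continuous hGK x p).sub
    (memLp_jacKernel hGL.continuous hGK x' p))] with y hy
  rw [hy]
  exact norm_jacKernel_sub_le hGL x x' p y

theorem l2dist_eq_norm_toLp_sub {u u' : E n → EuclideanSpace ℝ (Fin d)}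
    (hu : MemLp u 2 (volume.restrict Ω)) (hu' : MemLp u' 2 (volume.restrict Ω)) :
    l2dist Ω u u' = ‖hu.toLp u - hu'.toLp u'‖ := by
  rw [← MemLp.toLp_sub, MemLp.norm_toLp_eq_sqrt_integral, l2dist]
  rfl

theorem l2dist_nonneg {u u' : E n → EuclideanSpace ℝ (Fin d)} : 0 ≤ l2dist Ω u u' :=
  Real.sqrt_nonneg _

theorem smoothedJac_eq_inner [IsFiniteMeasure (volume.restrict Ω)] (hG : Continuous G)
    (hGK : ∀ w, ‖G w‖ ≤ K) {u : E n → EuclideanSpace ℝ (Fin d)}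
    (hu : MemLp u 2 (volume.restrict Ω)) (x : E n) (p : Fin d × Fin n) :
    smoothedJac Ω G u x p = ⟪hu.toLp u, (memLp_jacKernel hG hGK x p).toLp _⟫ := by
  rw [MemLp.inner_toLp_toLp]
  refine integral_congr_ae (Eventually.of_forall fun y => ?_)
  simp [jacKernel, real_inner_smul_right, EuclideanSpace.inner_single_right, mul_comm]

theorem exists_norm_smoothedJac_sub_le [IsFiniteMeasure (volume.restrict Ω)] (hG : Continuous G)
    (hGK : ∀ w, ‖G w‖ ≤ K) :
    ∃ M : ℝ≥0, ∀ (u u' : E n → EuclideanSpace ℝ (Fin d)), MemLp u 2 (volume.restrict Ω) →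
      MemLp u' 2 (volume.restrict Ω) → ∀ x : E n,
      ‖smoothedJac Ω G u x - smoothedJac Ω G u' x‖ ≤ M * l2dist Ω u u' := by
  have hK : 0 ≤ K := (norm_nonneg _).trans (hGK 0)
  refine ⟨measureUnivNNReal (volume.restrict Ω) ^ (2 : ℝ≥0∞).toReal⁻¹ * K.toNNReal,
    fun u u' hu hu' x =>
      (pi_norm_le_iff_of_nonneg (mul_nonneg (by positivity) l2dist_nonneg)).2 fun p => ?_⟩
  rw [Pi.sub_apply, smoothedJac_eq_inner hG hGK hu, smoothedJac_eq_inner hG hGK hu',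
    ← inner_sub_left, l2dist_eq_norm_toLp_sub hu hu', Real.norm_eq_abs, mul_comm]
  refine (abs_real_inner_le_norm _ _).trans (mul_le_mul_of_nonneg_left ?_ (norm_nonneg _))
  rw [NNReal.coe_mul, NNReal.coe_rpow, Real.coe_toNNReal _ hK]
  refine Lp.norm_le_of_ae_bound hK ?_
  filter_upwards [MemLp.coeFn_toLp (memLp_jacKernel hG hGK x p)] with y hy
  rw [hy]
  exact norm_jacKernel_le hGK x p y

theorem tendstoUniformlyOn_smoothedJac (hΩ : Bornology.IsBounded Ω) {L : ℝ≥0}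
    (hGL : LipschitzWith L G) (hGK : ∀ w, ‖G w‖ ≤ K) {u : ℕ → E n → EuclideanSpace ℝ (Fin d)}
    {ul : E n → EuclideanSpace ℝ (Fin d)} (h : WeakL2 Ω u ul) :
    TendstoUniformlyOn (fun k => smoothedJac Ω G (u k)) (smoothedJac Ω G ul) atTop (closure Ω) := by
  have : IsFiniteMeasure (volume.restrict Ω) := isFiniteMeasure_restrict.2 hΩ.measure_lt_top.ne
  refine tendstoUniformlyOn_pi_of_forall fun p => ?_
  let Φ x := (memLp_jacKernel (μ := volume.restrict Ω) hGL.continuous hGK x p).toLp _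
  have hS : IsCompact (Φ '' closure Ω) :=
    hΩ.isCompact_closure.image (continuous_toLp_jacKernel hGL hGK p)
  have hT := ContinuousLinearMap.tendstoUniformlyOn_of_tendsto
    (T := fun k => innerSL ℝ ((h.1 k).toLp (u k))) h.tendsto_inner_toLp hS
  have hrepr (v : E n → EuclideanSpace ℝ (Fin d)) (hv : MemLp v 2 (volume.restrict Ω)) :
      (fun x => smoothedJac Ω G v x p) = (fun φ => ⟪hv.toLp v, φ⟫) ∘ Φ :=
    funext (smoothedJac_eq_inner hGL.continuous hGK hv · p)
  rw [show (fun k x => smoothedJac Ω G (u k) x p) = _ from funext fun k => hrepr _ (h.1 k),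
    hrepr _ h.2.1]
  exact (hT.comp Φ).mono (subset_preimage_image Φ (closure Ω))

end SmoothedJacobian

theorem statement11_general {n : ℕ} (Ω : Set (E n))
    (hΩbdd : Bornology.IsBounded Ω)
    (σ ρ ξ1 ξ2 : ℝ) (hσ : 0 < σ) (hρ : 0 < ρ) (hξ1 : 0 < ξ1) (hξ2 : 0 < ξ2) :
    (∃ ca Ca : ℝ, 0 < ca ∧ ca < Ca ∧ ξ2 ≤ ca ∧
      ∀ u : E n → E 3, MemLp u 2 (volume.restrict Ω) →
        ∀ᵐ x ∂(volume.restrict Ω),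
          ca < Aop Ω σ ρ ξ1 ξ2 u x ∧ Aop Ω σ ρ ξ1 ξ2 u x < Ca) ∧
    (∀ (u : ℕ → E n → E 3) (ul : E n → E 3), WeakL2 Ω u ul →
      LinfTendsto Ω (fun k => Aop Ω σ ρ ξ1 ξ2 (u k)) (Aop Ω σ ρ ξ1 ξ2 ul)) ∧
    (∀ R > (0:ℝ), ∃ La > (0:ℝ), ∀ u utl : E n → E 3,
      MemLp u 2 (volume.restrict Ω) → MemLp utl 2 (volume.restrict Ω) →
      l2sq Ω u ≤ R → l2sq Ω utl ≤ R →
      eLpNorm (fun x => Aop Ω σ ρ ξ1 ξ2 u x - Aop Ω σ ρ ξ1 ξ2 utl x) ⊤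
          (volume.restrict Ω) ≤ ENNReal.ofReal (La * l2dist Ω u utl)) := by
  have : IsFiniteMeasure (volume.restrict Ω) := isFiniteMeasure_restrict.2 hΩbdd.measure_lt_top.ne
  obtain ⟨K, L, hK, hL⟩ := exists_bound_lipschitzWith_gaussKer (n := n) hσ hρ
  obtain ⟨Kψ, hψ⟩ := exists_lipschitzWith_anisoProfile (ι := Fin 3 × Fin n) hξ1 ξ2
  obtain ⟨M, hM⟩ := exists_norm_smoothedJac_sub_le (Ω := Ω) (d := 3) hL.continuous hK
  simp only [Aop_eq_anisoProfile]
  refine ⟨⟨ξ2, ξ2 + 2, hξ2, by linarith, le_rfl, fun u _ => ae_of_all _ fun x => ?_⟩,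
    fun u ul hw => ?_, fun R _ => ⟨Kψ * M + 1, by positivity, fun u u' hu hu' _ _ => ?_⟩⟩
  · obtain ⟨hlow, hup⟩ := anisoProfile_mem_Ioc hξ1.le ξ2 (smoothedJac Ω (gaussKer σ ρ) u x)
    exact ⟨hlow, hup.trans_lt (by linarith)⟩
  · refine tendsto_eLpNorm_top_of_tendstoUniformlyOn
      (ae_restrict_of_ae_restrict_of_subset subset_closure (ae_restrict_mem measurableSet_closure))
      (hψ.uniformContinuous.comp_tendstoUniformlyOn (tendstoUniformlyOn_smoothedJac hΩbdd hL hK hw))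
  · rw [eLpNorm_exponent_top]
    refine eLpNormEssSup_le_of_ae_bound (ae_of_all _ fun x => ?_)
    have hd : 0 ≤ l2dist Ω u u' := l2dist_nonneg
    calc ‖_‖ ≤ Kψ * ‖smoothedJac Ω (gaussKer σ ρ) u x - smoothedJac Ω (gaussKer σ ρ) u' x‖ := by
          simpa only [dist_eq_norm] using hψ.dist_le_mul _ _
      _ ≤ Kψ * (M * l2dist Ω u u') := by gcongr; exact hM u u' hu hu' x
      _ ≤ (Kψ * M + 1) * l2dist Ω u u' := by nlinarith

/-- the concrete anisotropy operator
`a[u] = exp(−‖𝒢_ρ ∗ D𝒢_σ ∗ u‖₂²/ξ₁) + ξ₂` satisfies the assumptions (A1)–(A3):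
uniform bounds `ξ₂ ≤ c_a < a[u](x) < C_a`, weak-`L²`-to-`L^∞` continuity, and local Lipschitz
continuity from `L²(Ω,ℝ³)` to `L^∞(Ω)`. -/
theorem statement11 {n : ℕ} (hn : n = 2 ∨ n = 3) (Ω : Set (E n))
    (hΩopen : IsOpen Ω) (hΩbdd : Bornology.IsBounded Ω)
    (σ ρ ξ1 ξ2 : ℝ) (hσ : 0 < σ) (hρ : 0 < ρ) (hξ1 : 0 < ξ1) (hξ2 : 0 < ξ2) :
    (∃ ca Ca : ℝ, 0 < ca ∧ ca < Ca ∧ ξ2 ≤ ca ∧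
      ∀ u : E n → E 3, MemLp u 2 (volume.restrict Ω) →
        ∀ᵐ x ∂(volume.restrict Ω),
          ca < Aop Ω σ ρ ξ1 ξ2 u x ∧ Aop Ω σ ρ ξ1 ξ2 u x < Ca) ∧
    (∀ (u : ℕ → E n → E 3) (ul : E n → E 3), WeakL2 Ω u ul →
      LinfTendsto Ω (fun k => Aop Ω σ ρ ξ1 ξ2 (u k)) (Aop Ω σ ρ ξ1 ξ2 ul)) ∧
    (∀ R > (0:ℝ), ∃ La > (0:ℝ), ∀ u utl : E n → E 3,
      MemLp u 2 (volume.restrict Ω) → MemLp utl 2 (volume.restrict Ω) →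
      l2sq Ω u ≤ R → l2sq Ω utl ≤ R →
      eLpNorm (fun x => Aop Ω σ ρ ξ1 ξ2 u x - Aop Ω σ ρ ξ1 ξ2 utl x) ⊤
          (volume.restrict Ω) ≤ ENNReal.ofReal (La * l2dist Ω u utl)) :=
  statement11_general Ω hΩbdd σ ρ ξ1 ξ2 hσ hρ hξ1 hξ2
end
end

section
/- Let n ∈ {2,3}, λ, μ > 0 and W(A) = (λ/2)(exp((log det A)²) − 1) + μ|A^sym − 𝟙|² on GL⁺(n). Then W satisfies the growth conditions (W2): there exist constants C_{W,1}, C_{W,2}, r_W > 0 such that W(A) ≥ C_{W,1}|A^sym − 𝟙|² for all A ∈ GL⁺(n) with |A − 𝟙| < r_W, and W(A) ≥ C_{W,2} for all A ∈ GL⁺(n) with |A − 𝟙| ≥ r_W. -/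
open MeasureTheory Filter Topology Matrix Set
open scoped ENNReal

noncomputable section

attribute [local instance] Matrix.frobeniusNormedAddCommGroup Matrix.frobeniusNormedSpace

/-- Matrices with positive determinant, `GL⁺(n)`. -/
def GLplus (n : ℕ) : Set (Matrix (Fin n) (Fin n) ℝ) := {A | 0 < A.det}

/-- Polyconvexity: `W(A) = g(A, cof A, det A)` for some convex function `g` of the minors. -/
def Polyconvex {n : ℕ} (W : Matrix (Fin n) (Fin n) ℝ → ℝ) : Prop :=
  ∃ g : Matrix (Fin n) (Fin n) ℝ × Matrix (Fin n) (Fin n) ℝ × ℝ → ℝ,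
    ConvexOn ℝ Set.univ g ∧ ∀ A ∈ GLplus n, W A = g (A, A.adjugate, A.det)

/-- Assumption (W1): `W ≥ 0`, `W ∈ C⁴(GL⁺(n))`, polyconvex, `W(𝟙) = 0`, `DW(𝟙) = 0`. -/
def AssumpW1 {n : ℕ} (W : Matrix (Fin n) (Fin n) ℝ → ℝ) : Prop :=
  (∀ A, 0 ≤ W A) ∧ ContDiffOn ℝ 4 W (GLplus n) ∧ Polyconvex W ∧
    W 1 = 0 ∧ fderiv ℝ W 1 = 0

/-- Assumption (W2): growth estimates with constants `C_{W,1}, C_{W,2}, r_W > 0`. -/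
def AssumpW2 {n : ℕ} (W : Matrix (Fin n) (Fin n) ℝ → ℝ) (CW1 CW2 rW : ℝ) : Prop :=
  0 < CW1 ∧ 0 < CW2 ∧ 0 < rW ∧ ∀ A ∈ GLplus n,
    (frobNorm (A - 1) < rW → CW1 * frobSq (symPart A - 1) ≤ W A) ∧
    (rW ≤ frobNorm (A - 1) → CW2 ≤ W A)

/-- The concrete energy density
`W(A) = (λ/2)(exp((log det A)²) − 1) + μ|A^sym − 𝟙|²`. -/
def Wex {n : ℕ} (lam mu : ℝ) (A : Matrix (Fin n) (Fin n) ℝ) : ℝ :=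
  lam/2 * (Real.exp ((Real.log A.det)^2) - 1) + mu * frobSq (symPart A - 1)


/-! Near `𝟙` the logarithmic term is nonnegative, so `C_{W,1} = μ` works. Away from `𝟙`, if both
terms of `W` were tiny, then `S = A^sym` would be close to `𝟙` and `det A` close to `1`. Write
`A = S + K` with `K` skew; then `|A − 𝟙|² = |S − 𝟙|² + |K|²`, and in dimensions 2 and 3
`det (S + K) = det S + k²`, resp. `det S + w ⬝ S w` with `w` the axial vector of `K`. Since `S` is
close to `𝟙`, the skew part raises the determinant by a fixed multiple of `|K|²`, so `|K|`, and
with it `|A − 𝟙|`, would be small. -/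

open Real

def skewPart {n : ℕ} (A : Matrix (Fin n) (Fin n) ℝ) : Matrix (Fin n) (Fin n) ℝ :=
  (1/2 : ℝ) • (A - Aᵀ)

section Frobenius

variable {n : ℕ}

lemma frobSq_nonneg (A : Matrix (Fin n) (Fin n) ℝ) : 0 ≤ frobSq A := by
  unfold frobSq; positivity

lemma sq_apply_le_frobSq (A : Matrix (Fin n) (Fin n) ℝ) (i j : Fin n) : A i j ^ 2 ≤ frobSq A :=
  (Finset.single_le_sum (fun j _ => sq_nonneg (A i j)) (Finset.mem_univ j)).trans
    (Finset.single_le_sum (f := fun i => ∑ j, A i j ^ 2) (fun _ _ => by positivity)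
      (Finset.mem_univ i))

lemma abs_apply_lt_of_frobSq_lt {A : Matrix (Fin n) (Fin n) ℝ} {r : ℝ} (hr : 0 ≤ r)
    (h : frobSq A < r ^ 2) (i j : Fin n) : |A i j| < r :=
  abs_lt_of_sq_lt_sq ((sq_apply_le_frobSq A i j).trans_lt h) hr

lemma frobSq_add_of_isSymm_of_transpose_eq_neg {M K : Matrix (Fin n) (Fin n) ℝ}
    (hM : M.IsSymm) (hK : Kᵀ = -K) : frobSq (M + K) = frobSq M + frobSq K := by
  have hcross : ∑ i, ∑ j, M i j * K i j = 0 := by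
    have hswap : ∀ i j, M j i * K j i = -(M i j * K i j) := fun i j => by
      rw [← transpose_apply M, hM.eq, ← transpose_apply K, hK, Matrix.neg_apply, mul_neg]
    have h : ∑ i, ∑ j, M i j * K i j = -∑ i, ∑ j, M i j * K i j :=
      calc ∑ i, ∑ j, M i j * K i j = ∑ i, ∑ j, M j i * K j i := Finset.sum_comm
        _ = ∑ i, ∑ j, -(M i j * K i j) :=
          Finset.sum_congr rfl fun i _ => Finset.sum_congr rfl fun j _ => hswap i j
        _ = _ := by simp only [Finset.sum_neg_distrib]
    linarith
  have hexp : ∀ i j, (M + K) i j ^ 2 = M i j ^ 2 + K i j ^ 2 + 2 * (M i j * K i j) :=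
    fun i j => by rw [Matrix.add_apply]; ring
  simp only [frobSq, hexp, Finset.sum_add_distrib, ← Finset.mul_sum, hcross, mul_zero, add_zero]

lemma isSymm_symPart (A : Matrix (Fin n) (Fin n) ℝ) : (symPart A).IsSymm := by
  simp only [IsSymm, symPart, transpose_smul, transpose_add, transpose_transpose, add_comm]

lemma skewPart_transpose (A : Matrix (Fin n) (Fin n) ℝ) : (skewPart A)ᵀ = -skewPart A := by
  simp only [skewPart, transpose_smul, transpose_sub, transpose_transpose, ← smul_neg, neg_sub]

lemma frobSq_sub_one_eq (A : Matrix (Fin n) (Fin n) ℝ) :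
    frobSq (A - 1) = frobSq (symPart A - 1) + frobSq (skewPart A) := by
  have hA : A - 1 = (symPart A - 1) + skewPart A := by
    simp only [symPart, skewPart]; module
  rw [hA, frobSq_add_of_isSymm_of_transpose_eq_neg ((isSymm_symPart A).sub isSymm_one)
    (skewPart_transpose A)]

lemma abs_dotProduct_mulVec_le (E : Matrix (Fin n) (Fin n) ℝ) (w : Fin n → ℝ) :
    |w ⬝ᵥ (E *ᵥ w)| ≤ frobNorm E * (w ⬝ᵥ w) := by
  have hquad : w ⬝ᵥ (E *ᵥ w) = ∑ p : Fin n × Fin n, E p.1 p.2 * (w p.1 * w p.2) := by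
    simp only [dotProduct, mulVec, Fintype.sum_prod_type, Finset.mul_sum]
    exact Finset.sum_congr rfl fun i _ => Finset.sum_congr rfl fun j _ => by ring
  have hfrob : frobSq E = ∑ p : Fin n × Fin n, E p.1 p.2 ^ 2 := by
    rw [Fintype.sum_prod_type]; rfl
  have hnorm : (w ⬝ᵥ w) ^ 2 = ∑ p : Fin n × Fin n, (w p.1 * w p.2) ^ 2 := by
    simp only [dotProduct, sq, Finset.sum_mul_sum, Fintype.sum_prod_type]
    exact Finset.sum_congr rfl fun i _ => Finset.sum_congr rfl fun j _ => by ring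
  refine abs_le_of_sq_le_sq ?_
    (mul_nonneg (sqrt_nonneg _) (Finset.sum_nonneg fun i _ => mul_self_nonneg (w i)))
  rw [mul_pow, frobNorm, sq_sqrt (frobSq_nonneg E), hquad, hfrob, hnorm]
  exact Finset.sum_mul_sq_le_sq_mul_sq _ _ _

lemma one_sub_frobNorm_mul_le_dotProduct_mulVec (S : Matrix (Fin n) (Fin n) ℝ)
    (w : Fin n → ℝ) : (1 - frobNorm (S - 1)) * (w ⬝ᵥ w) ≤ w ⬝ᵥ (S *ᵥ w) := by
  have hS : S *ᵥ w = w + (S - 1) *ᵥ w := by rw [sub_mulVec, one_mulVec]; abel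
  rw [hS, dotProduct_add]
  linarith [neg_abs_le (w ⬝ᵥ ((S - 1) *ᵥ w)), abs_dotProduct_mulVec_le (S - 1) w]

end Frobenius

section FinTwo

lemma det_fin_two_eq_det_symPart_add (A : Matrix (Fin 2) (Fin 2) ℝ) :
    A.det = (symPart A).det + skewPart A 0 1 ^ 2 := by
  simp only [det_fin_two, symPart, skewPart, Matrix.smul_apply, Matrix.add_apply,
    Matrix.sub_apply, transpose_apply, smul_eq_mul]
  ring

lemma frobSq_skewPart_fin_two (A : Matrix (Fin 2) (Fin 2) ℝ) :
    frobSq (skewPart A) = 2 * skewPart A 0 1 ^ 2 := by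
  simp only [frobSq, skewPart, Matrix.smul_apply, Matrix.sub_apply, transpose_apply, smul_eq_mul,
    Fin.sum_univ_two]
  ring

lemma nine_tenths_le_det_fin_two (S : Matrix (Fin 2) (Fin 2) ℝ)
    (h : frobSq (S - 1) < 1 / 10000) : 9 / 10 ≤ S.det := by
  set E := S - 1 with hE_def
  have hE : ∀ i j, |E i j| < 1 / 100 := abs_apply_lt_of_frobSq_lt (by norm_num) (by linarith)
  have hm : ∀ i j k l, |E i j * E k l| ≤ 1 / 10000 := fun i j k l => by
    rw [abs_mul]; nlinarith [abs_nonneg (E i j), abs_nonneg (E k l), hE i j, hE k l]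
  rw [← add_sub_cancel 1 S, ← hE_def, det_fin_two]
  simp only [Matrix.add_apply, one_apply_eq, one_apply_ne, ne_eq, Fin.reduceEq, not_false_eq_true,
    zero_add]
  linarith [abs_lt.mp (hE 0 0), abs_lt.mp (hE 1 1), abs_le.mp (hm 0 0 1 1), abs_le.mp (hm 0 1 1 0)]

lemma det_ge_of_frobSq_symPart_sub_one_lt_fin_two (A : Matrix (Fin 2) (Fin 2) ℝ)
    (h : frobSq (symPart A - 1) < 1 / 10000) :
    9 / 10 + 99 / 200 * frobSq (skewPart A) ≤ A.det := by
  rw [det_fin_two_eq_det_symPart_add, frobSq_skewPart_fin_two]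
  nlinarith [nine_tenths_le_det_fin_two _ h, sq_nonneg (skewPart A 0 1)]

end FinTwo

section FinThree

/-- For skew-symmetric `K`, `K *ᵥ v = v × axialVec K`. -/
def axialVec (K : Matrix (Fin 3) (Fin 3) ℝ) : Fin 3 → ℝ := ![K 1 2, K 2 0, K 0 1]

lemma det_fin_three_eq_det_symPart_add (A : Matrix (Fin 3) (Fin 3) ℝ) :
    A.det = (symPart A).det +
      axialVec (skewPart A) ⬝ᵥ (symPart A *ᵥ axialVec (skewPart A)) := by
  simp only [det_fin_three, symPart, skewPart, axialVec, Matrix.smul_apply, Matrix.add_apply,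
    Matrix.sub_apply, transpose_apply, smul_eq_mul, dotProduct, mulVec, Fin.sum_univ_three,
    cons_val_zero, cons_val_one, cons_val]
  ring

lemma frobSq_skewPart_fin_three (A : Matrix (Fin 3) (Fin 3) ℝ) :
    frobSq (skewPart A) = 2 * (axialVec (skewPart A) ⬝ᵥ axialVec (skewPart A)) := by
  simp only [frobSq, skewPart, axialVec, Matrix.smul_apply, Matrix.sub_apply, transpose_apply,
    smul_eq_mul, dotProduct, Fin.sum_univ_three, cons_val_zero, cons_val_one, cons_val]
  ring

lemma nine_tenths_le_det_fin_three (S : Matrix (Fin 3) (Fin 3) ℝ)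
    (h : frobSq (S - 1) < 1 / 10000) : 9 / 10 ≤ S.det := by
  set E := S - 1 with hE_def
  have hE : ∀ i j, |E i j| < 1 / 100 := abs_apply_lt_of_frobSq_lt (by norm_num) (by linarith)
  have hm : ∀ i j k l, |E i j * E k l| ≤ 1 / 10000 := fun i j k l => by
    rw [abs_mul]; nlinarith [abs_nonneg (E i j), abs_nonneg (E k l), hE i j, hE k l]
  have hm3 : ∀ i j k l p q, |E i j * E k l * E p q| ≤ 1 / 1000000 := fun i j k l p q => by
    rw [abs_mul]
    nlinarith [abs_nonneg (E i j * E k l), abs_nonneg (E p q), hm i j k l, hE p q]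
  rw [← add_sub_cancel 1 S, ← hE_def, det_fin_three]
  simp only [Matrix.add_apply, one_apply_eq, one_apply_ne, ne_eq, Fin.reduceEq, not_false_eq_true,
    zero_add]
  linarith [abs_lt.mp (hE 0 0), abs_lt.mp (hE 1 1), abs_lt.mp (hE 2 2),
    abs_le.mp (hm 0 0 1 1), abs_le.mp (hm 0 0 2 2), abs_le.mp (hm 1 1 2 2),
    abs_le.mp (hm 1 2 2 1), abs_le.mp (hm 0 1 1 0), abs_le.mp (hm 0 2 2 0),
    abs_le.mp (hm3 0 0 1 1 2 2), abs_le.mp (hm3 0 0 1 2 2 1), abs_le.mp (hm3 0 1 1 0 2 2),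
    abs_le.mp (hm3 0 1 1 2 2 0), abs_le.mp (hm3 0 2 1 0 2 1), abs_le.mp (hm3 0 2 1 1 2 0)]

lemma det_ge_of_frobSq_symPart_sub_one_lt_fin_three (A : Matrix (Fin 3) (Fin 3) ℝ)
    (h : frobSq (symPart A - 1) < 1 / 10000) :
    9 / 10 + 99 / 200 * frobSq (skewPart A) ≤ A.det := by
  have hnorm : frobNorm (symPart A - 1) < 1 / 100 := (sqrt_lt' (by norm_num)).2 (by linarith)
  have hw := one_sub_frobNorm_mul_le_dotProduct_mulVec (symPart A) (axialVec (skewPart A))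
  have hww : 0 ≤ axialVec (skewPart A) ⬝ᵥ axialVec (skewPart A) :=
    Finset.sum_nonneg fun i _ => mul_self_nonneg _
  rw [det_fin_three_eq_det_symPart_add, frobSq_skewPart_fin_three]
  nlinarith [nine_tenths_le_det_fin_three _ h]

end FinThree

lemma det_ge_of_frobSq_symPart_sub_one_lt {n : ℕ} (hn : n = 2 ∨ n = 3)
    (A : Matrix (Fin n) (Fin n) ℝ) (h : frobSq (symPart A - 1) < 1 / 10000) :
    9 / 10 + 99 / 200 * frobSq (skewPart A) ≤ A.det := by
  rcases hn with rfl | rfl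
  exacts [det_ge_of_frobSq_symPart_sub_one_lt_fin_two A h,
    det_ge_of_frobSq_symPart_sub_one_lt_fin_three A h]

lemma frobSq_sub_one_lt_one_of_det_le {n : ℕ} (hn : n = 2 ∨ n = 3)
    (A : Matrix (Fin n) (Fin n) ℝ) (hS : frobSq (symPart A - 1) < 1 / 10000)
    (hdet : A.det ≤ 100 / 99) : frobSq (A - 1) < 1 := by
  rw [frobSq_sub_one_eq]
  linarith [det_ge_of_frobSq_symPart_sub_one_lt hn A hS]

lemma lt_one_div_one_sub_of_log_lt {x t : ℝ} (hx : 0 < x) (h : log x < t) (ht : 0 < t)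
    (ht1 : t < 1) : x < 1 / (1 - t) :=
  calc x = exp (log x) := (exp_log hx).symm
    _ < exp t := exp_lt_exp.mpr h
    _ < 1 / (1 - t) := exp_bound_div_one_sub_of_interval' ht ht1

lemma le_Wex {n : ℕ} {lam : ℝ} (hlam : 0 ≤ lam) (mu : ℝ) (A : Matrix (Fin n) (Fin n) ℝ) :
    lam / 2 * log A.det ^ 2 + mu * frobSq (symPart A - 1) ≤ Wex lam mu A := by
  unfold Wex
  gcongr
  linarith [add_one_le_exp (log A.det ^ 2)]

/-- the concrete energy density satisfies the growth conditions (W2): there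
exist `C_{W,1}, C_{W,2}, r_W > 0` with `W(A) ≥ C_{W,1}|A^sym − 𝟙|²` whenever `|A − 𝟙| < r_W`
and `W(A) ≥ C_{W,2}` whenever `|A − 𝟙| ≥ r_W`, for all `A ∈ GL⁺(n)`. -/
theorem statement13 {n : ℕ} (hn : n = 2 ∨ n = 3) (lam mu : ℝ) (hlam : 0 < lam)
    (hmu : 0 < mu) :
    ∃ CW1 CW2 rW : ℝ, AssumpW2 (Wex (n := n) lam mu) CW1 CW2 rW := by
  refine ⟨mu, min mu (lam / 2) / 10000, 1, hmu, by positivity, one_pos,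
    fun A hA => ⟨fun _ => ?_, fun hA1 => ?_⟩⟩
  · nlinarith [le_Wex hlam.le mu A, sq_nonneg (log A.det)]
  · by_contra! hW
    have hWA := le_Wex hlam.le mu A
    have hL : 0 ≤ lam / 2 * log A.det ^ 2 := by positivity
    have hM : 0 ≤ mu * frobSq (symPart A - 1) := mul_nonneg hmu.le (frobSq_nonneg _)
    have hS : frobSq (symPart A - 1) < 1 / 10000 := by
      by_contra! h
      nlinarith [min_le_left mu (lam / 2)]
    have hlog : log A.det < 1 / 100 := by
      refine (abs_lt_of_sq_lt_sq' ?_ (by norm_num)).2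
      by_contra! h
      nlinarith [min_le_right mu (lam / 2)]
    have hdet : A.det ≤ 100 / 99 := by
      have := lt_one_div_one_sub_of_log_lt hA hlog (by norm_num) (by norm_num)
      norm_num at this
      exact this.le
    linarith [one_le_sqrt.mp hA1, frobSq_sub_one_lt_one_of_det_le hn A hS hdet]

end
end
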